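/- arXiv:math/0609197 — 4 statements merged into one kernel-verified Lean document; each statement's English description precedes it below -/
import Mathlib

section
/- Under the same hypotheses but with |λ| ≥ 1, there exist θ ∈ ℝ and a sign ε ∈ {+1, −1} such that P(B|C) = Σⱼ P(Aⱼ|C)P(B|Aⱼ) + 2ε·cosh θ·√(P(A₁|C)P(B|A₁)P(A₂|C)P(B|A₂)). -/
open MeasureTheory

/-- Probability of an event (as a real number). -/
noncomputable def pr {Ω : Type*} [MeasurableSpace Ω] (P : Measure Ω) (A : Set Ω) : ℝ :=
  (P A).toReal

/-- Contextual/conditional probability `P(A|C) = P(A ∩ C)/P(C)`. -/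
noncomputable def cpr {Ω : Type*} [MeasurableSpace Ω] (P : Measure Ω) (A C : Set Ω) : ℝ :=
  pr P (A ∩ C) / pr P C

theorem stmt7 {Ω : Type*} [MeasurableSpace Ω] (P : Measure Ω) [IsProbabilityMeasure P]
    (a b : Ω → ℝ) (a1 a2 x : ℝ) (ha : Measurable a) (hb : Measurable b)
    (hane : a1 ≠ a2) (hdich : ∀ ω, a ω = a1 ∨ a ω = a2)
    (A1 A2 B C : Set Ω)
    (hA1 : A1 = {ω | a ω = a1}) (hA2 : A2 = {ω | a ω = a2}) (hBdef : B = {ω | b ω = x})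
    (hC : MeasurableSet C) (hPC : pr P C ≠ 0)
    (h1 : pr P (A1 ∩ C) ≠ 0) (h2 : pr P (A2 ∩ C) ≠ 0)
    (hb1 : pr P (B ∩ A1) ≠ 0) (hb2 : pr P (B ∩ A2) ≠ 0)
    (lam : ℝ)
    (hlam : lam =
      (cpr P B C - (cpr P B A1 * cpr P A1 C + cpr P B A2 * cpr P A2 C)) /
        (2 * Real.sqrt (cpr P A1 C * cpr P B A1 * cpr P A2 C * cpr P B A2)))
    (hbound : 1 ≤ |lam|) :
    ∃ θ : ℝ, ∃ ε : ℝ, (ε = 1 ∨ ε = -1) ∧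
      cpr P B C = cpr P A1 C * cpr P B A1 + cpr P A2 C * cpr P B A2 +
        2 * ε * Real.cosh θ * Real.sqrt (cpr P A1 C * cpr P B A1 * cpr P A2 C * cpr P B A2) := by
  -- arcosh existence
  have hcosh : ∀ t : ℝ, 1 ≤ t → ∃ θ : ℝ, Real.cosh θ = t := by
    intro t ht
    have hu : (0:ℝ) ≤ t ^ 2 - 1 := by nlinarith
    set u := Real.sqrt (t ^ 2 - 1) with hudef
    have hu0 : 0 ≤ u := Real.sqrt_nonneg _
    have hu2 : u ^ 2 = t ^ 2 - 1 := Real.sq_sqrt hu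
    have hs : 0 < t + u := by linarith
    refine ⟨Real.log (t + u), ?_⟩
    rw [Real.cosh_log hs]
    have hmul : (t + u) * (t - u) = 1 := by nlinarith
    rw [inv_eq_of_mul_eq_one_right hmul]; ring
  -- positivity facts
  have hPCpos : 0 < pr P C := lt_of_le_of_ne ENNReal.toReal_nonneg (Ne.symm hPC)
  have h1pos : 0 < pr P (A1 ∩ C) := lt_of_le_of_ne ENNReal.toReal_nonneg (Ne.symm h1)
  have h2pos : 0 < pr P (A2 ∩ C) := lt_of_le_of_ne ENNReal.toReal_nonneg (Ne.symm h2)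
  have hb1pos : 0 < pr P (B ∩ A1) := lt_of_le_of_ne ENNReal.toReal_nonneg (Ne.symm hb1)
  have hb2pos : 0 < pr P (B ∩ A2) := lt_of_le_of_ne ENNReal.toReal_nonneg (Ne.symm hb2)
  have hmono : ∀ S T : Set Ω, S ⊆ T → pr P S ≤ pr P T := fun S T h =>
    ENNReal.toReal_mono (measure_ne_top P T) (measure_mono h)
  have hA1pos : 0 < pr P A1 := lt_of_lt_of_le h1pos (hmono _ _ Set.inter_subset_left)
  have hA2pos : 0 < pr P A2 := lt_of_lt_of_le h2pos (hmono _ _ Set.inter_subset_left)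
  have hc1 : 0 < cpr P A1 C := div_pos h1pos hPCpos
  have hc2 : 0 < cpr P A2 C := div_pos h2pos hPCpos
  have hc3 : 0 < cpr P B A1 := div_pos hb1pos hA1pos
  have hc4 : 0 < cpr P B A2 := div_pos hb2pos hA2pos
  have hprod : 0 < cpr P A1 C * cpr P B A1 * cpr P A2 C * cpr P B A2 := by positivity
  have hsq : 0 < Real.sqrt (cpr P A1 C * cpr P B A1 * cpr P A2 C * cpr P B A2) :=
    Real.sqrt_pos.mpr hprod
  obtain ⟨θ, hθ⟩ := hcosh |lam| hbound
  have hne : 2 * Real.sqrt (cpr P A1 C * cpr P B A1 * cpr P A2 C * cpr P B A2) ≠ 0 := by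
    positivity
  have hEq : lam * (2 * Real.sqrt (cpr P A1 C * cpr P B A1 * cpr P A2 C * cpr P B A2)) =
      cpr P B C - (cpr P B A1 * cpr P A1 C + cpr P B A2 * cpr P A2 C) := by
    rw [hlam, div_mul_cancel₀ _ hne]
  rcases le_or_gt 0 lam with hl | hl
  · refine ⟨θ, 1, Or.inl rfl, ?_⟩
    have hl2 : lam = Real.cosh θ := by rw [hθ, abs_of_nonneg hl]
    rw [hl2] at hEq
    linarith [hEq]
  · refine ⟨θ, -1, Or.inr rfl, ?_⟩
    have hl2 : lam = -Real.cosh θ := by rw [hθ, abs_of_neg hl]; ring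
    rw [hl2] at hEq
    linarith [hEq]
end

section
/- Let a take values a₁, a₂ and b take values b₁, b₂ with A_j, B_i the corresponding partitions, and let C be a context with P(Aⱼ ∩ C) ≠ 0 and all P(Bᵢ ∩ Aⱼ) ≠ 0. Define λᵢ as the interference coefficient of Bᵢ. If the matrix of transition probabilities p(bᵢ|aⱼ) = P(Bᵢ|Aⱼ) is doubly stochastic, then √(P(A₁|C)P(B₁|A₁)P(A₂|C)P(B₁|A₂))·λ₁ = −√(P(A₁|C)P(B₂|A₁)P(A₂|C)P(B₂|A₂))·λ₂; in particular if |λᵢ| ≤ 1 and λᵢ = cos θᵢ then cos θ₂ = −cos θ₁. -/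
open MeasureTheory

lemma pr_union_add {Ω : Type*} [MeasurableSpace Ω] (P : Measure Ω) [IsProbabilityMeasure P]
    {A B : Set Ω} (hd : Disjoint A B) (hB : MeasurableSet B) :
    pr P (A ∪ B) = pr P A + pr P B := by
  unfold pr
  rw [measure_union hd hB, ENNReal.toReal_add (measure_ne_top P A) (measure_ne_top P B)]

lemma pr_nonneg {Ω : Type*} [MeasurableSpace Ω] (P : Measure Ω) (A : Set Ω) :
    0 ≤ pr P A := ENNReal.toReal_nonneg

lemma pr_mono {Ω : Type*} [MeasurableSpace Ω] (P : Measure Ω) [IsProbabilityMeasure P]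
    {A B : Set Ω} (h : A ⊆ B) : pr P A ≤ pr P B :=
  ENNReal.toReal_mono (measure_ne_top P B) (measure_mono h)

theorem stmt8 {Ω : Type*} [MeasurableSpace Ω] (P : Measure Ω) [IsProbabilityMeasure P]
    (a b : Ω → ℝ) (a1 a2 b1 b2 : ℝ) (ha : Measurable a) (hb : Measurable b)
    (hane : a1 ≠ a2) (hbne : b1 ≠ b2)
    (hadich : ∀ ω, a ω = a1 ∨ a ω = a2) (hbdich : ∀ ω, b ω = b1 ∨ b ω = b2)
    (A1 A2 B1 B2 C : Set Ω)
    (hA1 : A1 = {ω | a ω = a1}) (hA2 : A2 = {ω | a ω = a2})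
    (hB1 : B1 = {ω | b ω = b1}) (hB2 : B2 = {ω | b ω = b2})
    (hC : MeasurableSet C) (hPC : pr P C ≠ 0)
    (h1 : pr P (A1 ∩ C) ≠ 0) (h2 : pr P (A2 ∩ C) ≠ 0)
    (h11 : pr P (B1 ∩ A1) ≠ 0) (h12 : pr P (B1 ∩ A2) ≠ 0)
    (h21 : pr P (B2 ∩ A1) ≠ 0) (h22 : pr P (B2 ∩ A2) ≠ 0)
    (hds1 : cpr P B1 A1 + cpr P B1 A2 = 1) (hds2 : cpr P B2 A1 + cpr P B2 A2 = 1)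
    (lam1 lam2 : ℝ)
    (hlam1 : lam1 =
      (cpr P B1 C - (cpr P B1 A1 * cpr P A1 C + cpr P B1 A2 * cpr P A2 C)) /
        (2 * Real.sqrt (cpr P A1 C * cpr P B1 A1 * cpr P A2 C * cpr P B1 A2)))
    (hlam2 : lam2 =
      (cpr P B2 C - (cpr P B2 A1 * cpr P A1 C + cpr P B2 A2 * cpr P A2 C)) /
        (2 * Real.sqrt (cpr P A1 C * cpr P B2 A1 * cpr P A2 C * cpr P B2 A2))) :
    Real.sqrt (cpr P A1 C * cpr P B1 A1 * cpr P A2 C * cpr P B1 A2) * lam1 =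
      -(Real.sqrt (cpr P A1 C * cpr P B2 A1 * cpr P A2 C * cpr P B2 A2) * lam2) ∧
    ∀ θ1 θ2 : ℝ, lam1 = Real.cos θ1 → lam2 = Real.cos θ2 →
      Real.cos θ2 = -Real.cos θ1 := by
  -- measurability
  have hmA1 : MeasurableSet A1 := hA1 ▸ ha (measurableSet_singleton a1)
  have hmA2 : MeasurableSet A2 := hA2 ▸ ha (measurableSet_singleton a2)
  have hmB2 : MeasurableSet B2 := hB2 ▸ hb (measurableSet_singleton b2)
  -- partition facts
  have hAdisj : Disjoint A1 A2 := by
    rw [Set.disjoint_left]; intro ω hx hy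
    rw [hA1] at hx; rw [hA2] at hy; exact hane (hx ▸ hy)
  have hAunion : A1 ∪ A2 = Set.univ := by
    ext ω; simp only [Set.mem_union, Set.mem_univ, iff_true, hA1, hA2, Set.mem_setOf_eq]
    exact hadich ω
  have hBdisj : Disjoint B1 B2 := by
    rw [Set.disjoint_left]; intro ω hx hy
    rw [hB1] at hx; rw [hB2] at hy; exact hbne (hx ▸ hy)
  have hBunion : B1 ∪ B2 = Set.univ := by
    ext ω; simp only [Set.mem_union, Set.mem_univ, iff_true, hB1, hB2, Set.mem_setOf_eq]
    exact hbdich ω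
  have keyA : ∀ X : Set Ω, MeasurableSet X → pr P (A1 ∩ X) + pr P (A2 ∩ X) = pr P X := by
    intro X hX
    rw [← pr_union_add P (hAdisj.mono Set.inter_subset_left Set.inter_subset_left)
      (hmA2.inter hX), ← Set.union_inter_distrib_right, hAunion, Set.univ_inter]
  have keyB : ∀ X : Set Ω, MeasurableSet X → pr P (B1 ∩ X) + pr P (B2 ∩ X) = pr P X := by
    intro X hX
    rw [← pr_union_add P (hBdisj.mono Set.inter_subset_left Set.inter_subset_left)
      (hmB2.inter hX), ← Set.union_inter_distrib_right, hBunion, Set.univ_inter]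
  -- nonvanishing denominators
  have hPA1 : pr P A1 ≠ 0 := fun h => h11 (le_antisymm
    (h ▸ pr_mono P Set.inter_subset_right) (pr_nonneg P _))
  have hPA2 : pr P A2 ≠ 0 := fun h => h12 (le_antisymm
    (h ▸ pr_mono P Set.inter_subset_right) (pr_nonneg P _))
  -- column sums (probability)
  have col1 : cpr P B1 A1 + cpr P B2 A1 = 1 := by
    unfold cpr; rw [← add_div, keyB A1 hmA1, div_self hPA1]
  have col2 : cpr P B1 A2 + cpr P B2 A2 = 1 := by
    unfold cpr; rw [← add_div, keyB A2 hmA2, div_self hPA2]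
  have sumAC : cpr P A1 C + cpr P A2 C = 1 := by
    unfold cpr; rw [← add_div, keyA C hC, div_self hPC]
  have sumBC : cpr P B1 C + cpr P B2 C = 1 := by
    unfold cpr; rw [← add_div, keyB C hC, div_self hPC]
  -- doubly stochastic symmetry
  have e21 : cpr P B2 A1 = cpr P B1 A2 := by linarith
  have e22 : cpr P B2 A2 = cpr P B1 A1 := by linarith
  -- positivity of the argument and equality of the two sqrt args
  have hposA1 : 0 < cpr P A1 C :=
    div_pos ((pr_nonneg P _).lt_of_ne' h1) ((pr_nonneg P _).lt_of_ne' hPC)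
  have hposA2 : 0 < cpr P A2 C :=
    div_pos ((pr_nonneg P _).lt_of_ne' h2) ((pr_nonneg P _).lt_of_ne' hPC)
  have hpos11 : 0 < cpr P B1 A1 :=
    div_pos ((pr_nonneg P _).lt_of_ne' h11) ((pr_nonneg P _).lt_of_ne' hPA1)
  have hpos12 : 0 < cpr P B1 A2 :=
    div_pos ((pr_nonneg P _).lt_of_ne' h12) ((pr_nonneg P _).lt_of_ne' hPA2)
  have hargeq : cpr P A1 C * cpr P B2 A1 * cpr P A2 C * cpr P B2 A2 =
      cpr P A1 C * cpr P B1 A1 * cpr P A2 C * cpr P B1 A2 := by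
    rw [e21, e22]; ring
  have hargpos : 0 < cpr P A1 C * cpr P B1 A1 * cpr P A2 C * cpr P B1 A2 :=
    mul_pos (mul_pos (mul_pos hposA1 hpos11) hposA2) hpos12
  have hsqrtpos : 0 < Real.sqrt (cpr P A1 C * cpr P B1 A1 * cpr P A2 C * cpr P B1 A2) :=
    Real.sqrt_pos.mpr hargpos
  -- numerators are negatives of each other
  have hnum : cpr P B2 C - (cpr P B2 A1 * cpr P A1 C + cpr P B2 A2 * cpr P A2 C) =
      -(cpr P B1 C - (cpr P B1 A1 * cpr P A1 C + cpr P B1 A2 * cpr P A2 C)) := by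
    rw [e21, e22]; nlinarith [sumAC, sumBC, hds1]
  have hlam : lam2 = -lam1 := by
    rw [hlam1, hlam2, hargeq, hnum, neg_div]
  constructor
  · rw [hargeq, hlam]; ring
  · intro θ1 θ2 ht1 ht2
    rw [← ht1, ← ht2, hlam]
end

section
/- Let P^{b|a} be doubly stochastic (entries p(bᵢ|aⱼ) ∈ (0,1)). Then the interference coefficients λ(B₁|{A₁,A₂}, B₁) and λ(B₂|{A₁,A₂}, B₂) both lie in [−1, 1] if and only if P^{a|b} is doubly stochastic. -/
open MeasureTheory

private lemma pr_add14 {Ω : Type*} [MeasurableSpace Ω] (P : Measure Ω) [IsProbabilityMeasure P]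
    (X Y A : Set Ω) (hY : MeasurableSet Y) (hA : MeasurableSet A)
    (hXY : X ∩ Y = ∅) (hU : X ∪ Y = Set.univ) :
    pr P A = pr P (X ∩ A) + pr P (Y ∩ A) := by
  have hdisj : Disjoint (X ∩ A) (Y ∩ A) := by
    apply Set.disjoint_of_subset Set.inter_subset_left Set.inter_subset_left
    rw [Set.disjoint_iff_inter_eq_empty]; exact hXY
  have hu : (X ∩ A) ∪ (Y ∩ A) = A := by
    rw [← Set.union_inter_distrib_right, hU, Set.univ_inter]
  unfold pr
  conv_lhs => rw [← hu]
  rw [measure_union hdisj (hY.inter hA),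
    ENNReal.toReal_add (measure_ne_top P _) (measure_ne_top P _)]

private lemma core14 (p q r s : ℝ) (hp : 0 < p) (hq : 0 < q) (hr : 0 < r) (hs : 0 < s)
    (H : p * q = r * s) :
    |(1 - (p/(p+r) * (p/(p+q)) + q/(q+s) * (q/(p+q)))) /
        (2 * Real.sqrt (p/(p+q) * (p/(p+r)) * (q/(p+q)) * (q/(q+s))))| ≤ 1 ↔ p = s := by
  have hpq : 0 < p + q := by linarith
  have hqs : 0 < q + s := by linarith
  have hpr : 0 < p + r := by linarith
  have e1 : p/(p+r) = s/(q+s) := by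
    rw [div_eq_div_iff hpr.ne' hqs.ne']; linear_combination H
  rw [e1]
  have hT : 0 < (p+q) * (q+s) := mul_pos hpq hqs
  have hW : p/(p+q) * (s/(q+s)) * (q/(p+q)) * (q/(q+s))
      = (p*s*q^2)/((p+q) * (q+s))^2 := by field_simp
  have hN : 1 - (s/(q+s) * (p/(p+q)) + q/(q+s) * (q/(p+q)))
      = q*(p+s)/((p+q)*(q+s)) := by field_simp; ring
  rw [hW, hN]
  have hsqrtW : Real.sqrt ((p*s*q^2)/((p+q)*(q+s))^2)
      = Real.sqrt (p*s*q^2) / ((p+q)*(q+s)) := by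
    rw [Real.sqrt_div (by positivity), Real.sqrt_sq hT.le]
  rw [hsqrtW]
  have husq : Real.sqrt (p*s*q^2) ^ 2 = p*s*q^2 := Real.sq_sqrt (by positivity)
  have hupos : 0 < Real.sqrt (p*s*q^2) := Real.sqrt_pos.mpr (by positivity)
  have hNpos : 0 < q*(p+s)/((p+q)*(q+s)) := by positivity
  have habs : |q*(p+s)/((p+q)*(q+s)) / (2 * (Real.sqrt (p*s*q^2) / ((p+q)*(q+s))))| ≤ 1
      ↔ q*(p+s) ≤ 2 * Real.sqrt (p*s*q^2) := by
    rw [abs_of_pos (by positivity), div_le_one (by positivity),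
      show 2 * (Real.sqrt (p*s*q^2) / ((p+q)*(q+s))) = (2*Real.sqrt (p*s*q^2))/((p+q)*(q+s)) by
        ring,
      div_le_div_iff_of_pos_right hT]
  rw [habs]
  constructor
  · intro h
    have h2 : (q*(p+s))*(q*(p+s)) ≤ (2*Real.sqrt (p*s*q^2))*(2*Real.sqrt (p*s*q^2)) :=
      mul_le_mul h h (by positivity) (by positivity)
    have h4 : (p - s)^2 * q^2 ≤ 0 := by nlinarith [husq]
    have hq2 : (0:ℝ) < q^2 := by positivity
    have h5 : (p - s)^2 ≤ 0 := by nlinarith [h4, hq2]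
    have h6 : (p - s)^2 = 0 := le_antisymm h5 (sq_nonneg _)
    have h7 : p - s = 0 := pow_eq_zero_iff two_ne_zero |>.mp h6
    linarith
  · intro h
    subst h
    have : Real.sqrt (p*p*q^2) = p*q := by
      rw [show p*p*q^2 = (p*q)^2 by ring, Real.sqrt_sq (by positivity)]
    rw [this]; nlinarith


theorem stmt14 {Ω : Type*} [MeasurableSpace Ω] (P : Measure Ω) [IsProbabilityMeasure P]
    (A1 A2 B1 B2 : Set Ω)
    (hA1 : MeasurableSet A1) (hA2 : MeasurableSet A2)
    (hB1 : MeasurableSet B1) (hB2 : MeasurableSet B2)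
    (hApart : A1 ∩ A2 = ∅ ∧ A1 ∪ A2 = Set.univ)
    (hBpart : B1 ∩ B2 = ∅ ∧ B1 ∪ B2 = Set.univ)
    (h11 : 0 < pr P (B1 ∩ A1)) (h12 : 0 < pr P (B1 ∩ A2))
    (h21 : 0 < pr P (B2 ∩ A1)) (h22 : 0 < pr P (B2 ∩ A2))
    (hIoo : cpr P B1 A1 ∈ Set.Ioo (0 : ℝ) 1 ∧ cpr P B1 A2 ∈ Set.Ioo (0 : ℝ) 1 ∧
            cpr P B2 A1 ∈ Set.Ioo (0 : ℝ) 1 ∧ cpr P B2 A2 ∈ Set.Ioo (0 : ℝ) 1)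
    (hds_ba : cpr P B1 A1 + cpr P B1 A2 = 1 ∧ cpr P B2 A1 + cpr P B2 A2 = 1) :
    (|(cpr P B1 B1 - (cpr P B1 A1 * cpr P A1 B1 + cpr P B1 A2 * cpr P A2 B1)) /
        (2 * Real.sqrt (cpr P A1 B1 * cpr P B1 A1 * cpr P A2 B1 * cpr P B1 A2))| ≤ 1 ∧
     |(cpr P B2 B2 - (cpr P B2 A1 * cpr P A1 B2 + cpr P B2 A2 * cpr P A2 B2)) /
        (2 * Real.sqrt (cpr P A1 B2 * cpr P B2 A1 * cpr P A2 B2 * cpr P B2 A2))| ≤ 1) ↔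
    (cpr P A1 B1 + cpr P A1 B2 = 1 ∧ cpr P A2 B1 + cpr P A2 B2 = 1) := by
  obtain ⟨hAd, hAu⟩ := hApart
  obtain ⟨hBd, hBu⟩ := hBpart
  have hcomm : ∀ X Y : Set Ω, pr P (X ∩ Y) = pr P (Y ∩ X) := fun X Y => by rw [Set.inter_comm]
  have hA1e : pr P A1 = pr P (B1 ∩ A1) + pr P (B2 ∩ A1) := pr_add14 P B1 B2 A1 hB2 hA1 hBd hBu
  have hA2e : pr P A2 = pr P (B1 ∩ A2) + pr P (B2 ∩ A2) := pr_add14 P B1 B2 A2 hB2 hA2 hBd hBu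
  have hB1e : pr P B1 = pr P (B1 ∩ A1) + pr P (B1 ∩ A2) := by
    rw [pr_add14 P A1 A2 B1 hA2 hB1 hAd hAu, hcomm A1 B1, hcomm A2 B1]
  have hB2e : pr P B2 = pr P (B2 ∩ A1) + pr P (B2 ∩ A2) := by
    rw [pr_add14 P A1 A2 B2 hA2 hB2 hAd hAu, hcomm A1 B2, hcomm A2 B2]
  set p := pr P (B1 ∩ A1) with hpdef
  set q := pr P (B1 ∩ A2) with hqdef
  set r := pr P (B2 ∩ A1) with hrdef
  set s := pr P (B2 ∩ A2) with hsdef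
  have hp : 0 < p := h11
  have hq : 0 < q := h12
  have hr : 0 < r := h21
  have hs : 0 < s := h22
  have hB1pos : 0 < pr P B1 := by rw [hB1e]; linarith
  have hB2pos : 0 < pr P B2 := by rw [hB2e]; linarith
  have c1 : cpr P B1 A1 = p/(p+r) := by unfold cpr; rw [hA1e]
  have c2 : cpr P B1 A2 = q/(q+s) := by unfold cpr; rw [hA2e]
  have c3 : cpr P B2 A1 = r/(p+r) := by unfold cpr; rw [hA1e]
  have c4 : cpr P B2 A2 = s/(q+s) := by unfold cpr; rw [hA2e]
  have d1 : cpr P A1 B1 = p/(p+q) := by unfold cpr; rw [hcomm A1 B1, hB1e]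
  have d2 : cpr P A2 B1 = q/(p+q) := by unfold cpr; rw [hcomm A2 B1, hB1e]
  have d3 : cpr P A1 B2 = r/(r+s) := by unfold cpr; rw [hcomm A1 B2, hB2e]
  have d4 : cpr P A2 B2 = s/(r+s) := by unfold cpr; rw [hcomm A2 B2, hB2e]
  have e1 : cpr P B1 B1 = 1 := by
    unfold cpr; rw [Set.inter_self]; exact div_self hB1pos.ne'
  have e2 : cpr P B2 B2 = 1 := by
    unfold cpr; rw [Set.inter_self]; exact div_self hB2pos.ne'
  rw [c1, c2, c3, c4, d1, d2, d3, d4, e1, e2]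
  have hds1 := hds_ba.1
  rw [c1, c2] at hds1
  have hpq : 0 < p + q := by linarith
  have hqs : 0 < q + s := by linarith
  have hprs : 0 < p + r := by linarith
  have hrs : 0 < r + s := by linarith
  have H : p * q = r * s := by
    field_simp at hds1
    linear_combination hds1
  have core_a := core14 p q r s hp hq hr hs H
  have core_b := core14 r s p q hr hs hp hq (by linarith [H])
  rw [add_comm r p, add_comm s q] at core_b
  constructor
  · rintro ⟨h1, h2⟩
    have hps : p = s := core_a.mp h1
    have hrq : r = q := core_b.mp h2
    constructor
    · rw [hps, hrq]; rw [add_comm s q] at *; field_simp; ring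
    · rw [hps, hrq]; field_simp; ring
  · rintro ⟨h1, h2⟩
    have K : p * r = q * s := by
      field_simp at h1
      linear_combination h1
    have hps : p = s := by
      have hz : (p - s) * ((p + s) * (q * r)) = 0 := by
        linear_combination (p*r) * H + (r*s) * K
      rcases mul_eq_zero.mp hz with h | h
      · linarith
      · have hpos : 0 < (p + s) * (q * r) := by positivity
        linarith
    have hrq : r = q := by
      have h' : s * q = s * r := by linear_combination H - q * hps
      exact (mul_left_cancel₀ hs.ne' h').symm
    exact ⟨core_a.mpr hps, core_b.mpr hrq⟩
end

section
/- Let c₁, …, cₙ ≥ 0 with Σⱼ cⱼ ≤ S for some S ≥ 0 and suppose at each step j = 1, …, n−1 the quantity μⱼ = (Sⱼ − cⱼ − S_{j+1}) / (2√(cⱼ·S_{j+1})) (where S₁ = S and S_{j+1} = Sⱼ − cⱼ − 2μⱼ√(cⱼS_{j+1}) is the recursively defined remainder) satisfies |μⱼ| ≤ 1 with cⱼ, S_{j+1} > 0. Then there exist real phases β⁽¹⁾ = 0, β⁽²⁾, …, β⁽ⁿ⁾ such that S = |Σⱼ e^{iβ⁽ʲ⁾}√(cⱼ)|². -/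
lemma key19 (a b θ : ℝ) (ha : 0 ≤ a) (hb : 0 ≤ b) :
    ‖(Real.sqrt a : ℂ) + Complex.exp (θ * Complex.I) * (Real.sqrt b : ℂ)‖ ^ 2
      = a + b + 2 * Real.sqrt a * Real.sqrt b * Real.cos θ := by
  rw [Complex.sq_norm, Complex.normSq_apply, Complex.exp_mul_I]
  simp [Complex.add_re, Complex.add_im, Complex.mul_re, Complex.mul_im,
    Complex.cos_ofReal_re, Complex.sin_ofReal_re]
  have h1 := Real.sin_sq_add_cos_sq θ
  have h2 := Real.sq_sqrt ha
  have h3 := Real.sq_sqrt hb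
  nlinarith [h1, h2, h3]

theorem stmt19 (n : ℕ) (hn : 0 < n) (S : ℝ) (hS : 0 ≤ S) (c : ℕ → ℝ)
    (hc : ∀ j < n, 0 < c j) (hsum : ∑ j ∈ Finset.range n, c j ≤ S)
    (R : ℕ → ℝ) (hR0 : R 0 = S) (hRlast : R (n - 1) = c (n - 1))
    (hRpos : ∀ j < n, 0 < R j)
    (hμ : ∀ j < n - 1,
      |(R j - c j - R (j + 1)) / (2 * Real.sqrt (c j * R (j + 1)))| ≤ 1) :
    ∃ β : ℕ → ℝ, β 0 = 0 ∧
      S = ‖∑ j ∈ Finset.range n,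
        Complex.exp (β j * Complex.I) * (Real.sqrt (c j) : ℂ)‖ ^ 2 := by
  -- main induction: for each d, with j = n-1-d, there are phases with β j = 0 and
  -- |∑_{k ∈ [j,n)} e^{iβ_k}√(c k)|² = R j
  have main : ∀ d j, j + d = n - 1 → ∃ β : ℕ → ℝ, β j = 0 ∧
      ‖∑ k ∈ Finset.Ico j n,
        Complex.exp (β k * Complex.I) * (Real.sqrt (c k) : ℂ)‖ ^ 2 = R j := by
    intro d
    induction d with
    | zero =>
      intro j hj
      simp only [Nat.add_zero] at hj
      subst hj
      refine ⟨fun _ => 0, rfl, ?_⟩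
      have h1 : n = (n - 1) + 1 := (Nat.succ_pred_eq_of_pos hn).symm
      rw [show Finset.Ico (n-1) n = {n-1} by rw [h1]; exact Nat.Ico_succ_singleton _]
      simp only [Finset.sum_singleton]
      rw [hRlast]
      have hcpos := hc (n-1) (by omega)
      simp [Complex.norm_exp, Real.sq_sqrt hcpos.le]
    | succ d ih =>
      intro j hj
      have hj1 : (j + 1) + d = n - 1 := by omega
      obtain ⟨β, hβ0, hβ⟩ := ih (j+1) hj1
      have hjn1 : j < n - 1 := by omega
      have hjn : j < n := by omega
      have hj1n : j + 1 < n := by omega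
      have hcj := hc j hjn
      have hR' := hRpos (j+1) hj1n
      set z : ℂ := ∑ k ∈ Finset.Ico (j+1) n,
        Complex.exp (β k * Complex.I) * (Real.sqrt (c k) : ℂ) with hzdef
      have habsz : (‖z‖ : ℝ) = Real.sqrt (R (j+1)) := by
        rw [← hβ, Real.sqrt_sq (norm_nonneg z)]
      -- the angle θ with cos θ = μ_j
      set D : ℝ := 2 * Real.sqrt (c j * R (j+1)) with hDdef
      have hDpos : 0 < D := by positivity
      set μ : ℝ := (R j - c j - R (j+1)) / D with hμdef
      have hμ1 := hμ j hjn1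
      rw [abs_le] at hμ1
      set θ : ℝ := Real.arccos μ with hθdef
      have hcosθ : Real.cos θ = μ := Real.cos_arccos hμ1.1 hμ1.2
      set φ : ℝ := Complex.arg z with hφdef
      refine ⟨fun k => if k = j then 0 else β k + (θ - φ), if_pos rfl, ?_⟩
      rw [Finset.sum_eq_sum_Ico_succ_bot hjn]
      have hrest : (∑ k ∈ Finset.Ico (j+1) n,
          Complex.exp ((if k = j then (0:ℝ) else β k + (θ - φ)) * Complex.I)
            * (Real.sqrt (c k) : ℂ))
          = Complex.exp ((θ - φ : ℝ) * Complex.I) * z := by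
        rw [hzdef, Finset.mul_sum]
        refine Finset.sum_congr rfl fun k hk => ?_
        have hkj : k ≠ j := by
          have := (Finset.mem_Ico.mp hk).1; omega
        rw [if_neg hkj, ← mul_assoc, ← Complex.exp_add]
        congr 2
        push_cast
        ring
      rw [hrest]
      have hrot : Complex.exp ((θ - φ : ℝ) * Complex.I) * z
          = Complex.exp ((θ : ℝ) * Complex.I) * (Real.sqrt (R (j+1)) : ℂ) := by
        conv_lhs => rw [← Complex.norm_mul_exp_arg_mul_I z]
        rw [mul_left_comm, ← Complex.exp_add, habsz, mul_comm]
        congr 2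
        push_cast
        ring
      rw [hrot, show (fun k => if k = j then (0:ℝ) else β k + (θ - φ)) j = 0 from if_pos rfl]
      simp only [Complex.ofReal_zero, zero_mul, Complex.exp_zero, one_mul]
      rw [key19 (c j) (R (j+1)) θ hcj.le hR'.le]
      have hsq : Real.sqrt (c j) * Real.sqrt (R (j+1)) = Real.sqrt (c j * R (j+1)) :=
        (Real.sqrt_mul hcj.le _).symm
      rw [hcosθ]
      have : μ * D = R j - c j - R (j+1) := by
        rw [hμdef]
        field_simp
      rw [hDdef] at this
      nlinarith [this, hsq]
  obtain ⟨β, hβ0, hβ⟩ := main (n-1) 0 (by omega)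
  refine ⟨β, hβ0, ?_⟩
  rw [← Finset.range_eq_Ico] at hβ
  rw [hβ, hR0]
end
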